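/- arXiv:2505.13199 — 6 statements merged into one kernel-verified Lean document; each statement's English description precedes it below -/
import Mathlib

section
/- Let G be a graph and v an eigenvector of L(G) with eigenvalue λ such that all entries of v lie in {-1,0,1} and no edge of G joins two vertices with equal v-values. Then for every vertex j with v_j ∈ {1,-1}, λ = d_j + d̄_j, where d_j is the degree of j and d̄_j is the number of neighbors k of j with v_k ≠ 0. -/
open SimpleGraph Matrix Finset

/-!
Row `j` of the eigenvalue equation reads `λ v_j = d_j v_j - ∑_{k ~ j} v_k`. Zero neighbours
contribute nothing, and since there are no equal links and all values lie in `{-1, 0, 1}`,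
every nonzero neighbour of a `±1` vertex carries the opposite value `-v_j`. Hence the
neighbour sum is `-v_j d̄_j`, and dividing by `v_j ≠ 0` gives `λ = d_j + d̄_j`.
-/

lemma eq_neg_of_trivalent_of_ne {x y : ℝ} (hx : x = -1 ∨ x = 0 ∨ x = 1)
    (hy : y = -1 ∨ y = 0 ∨ y = 1) (hx0 : x ≠ 0) (hy0 : y ≠ 0) (hxy : x ≠ y) : y = -x := by
  rcases hx with rfl | rfl | rfl <;> rcases hy with rfl | rfl | rfl <;> norm_num at *

lemma sum_neighborFinset_eq_neg_mul_card_filter_ne_zero {V : Type*} [Fintype V] (G : SimpleGraph V)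
    [DecidableRel G.Adj] (v : V → ℝ) (htri : ∀ i, v i = -1 ∨ v i = 0 ∨ v i = 1)
    (hnel : ∀ i j, G.Adj i j → v i ≠ v j) {j : V} (hj : v j ≠ 0) :
    ∑ k ∈ G.neighborFinset j, v k = -v j * #{k ∈ G.neighborFinset j | v k ≠ 0} := by
  have hopp : ∀ k ∈ {k ∈ G.neighborFinset j | v k ≠ 0}, v k = -v j := fun k hk => by
    rw [mem_filter, mem_neighborFinset] at hk
    exact eq_neg_of_trivalent_of_ne (htri j) (htri k) hj hk.2 (hnel j k hk.1)
  rw [← sum_filter_ne_zero, sum_congr rfl hopp, sum_const, nsmul_eq_mul, mul_comm]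

theorem trivalent_nonsoft_eigenvalue_general {V : Type*} [Fintype V] [DecidableEq V]
    (G : SimpleGraph V) [DecidableRel G.Adj]
    (v : V → ℝ) (l : ℝ)
    (heig : G.lapMatrix ℝ *ᵥ v = l • v)
    (htri : ∀ i, v i = -1 ∨ v i = 0 ∨ v i = 1)
    (hnel : ∀ i j, G.Adj i j → v i ≠ v j)
    (j : V) (hj : v j = 1 ∨ v j = -1) :
    l = (G.degree j : ℝ) + (((G.neighborFinset j).filter fun k => v k ≠ 0).card : ℝ) := by
  have hj0 : v j ≠ 0 := by rcases hj with h | h <;> simp [h]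
  have hrow := congrFun heig j
  rw [lapMatrix_mulVec_apply, sum_neighborFinset_eq_neg_mul_card_filter_ne_zero G v htri hnel hj0,
    Pi.smul_apply, smul_eq_mul] at hrow
  refine mul_right_cancel₀ hj0 ?_
  linarith

/-- For a trivalent eigenvector (entries in `{-1,0,1}`) with no equal links,
every vertex valued `±1` satisfies `λ = d_j + d̄_j`, where `d̄_j` is the hard degree
(number of neighbors with nonzero value). -/
theorem trivalent_nonsoft_eigenvalue {V : Type*} [Fintype V] [DecidableEq V]
    (G : SimpleGraph V) [DecidableRel G.Adj]
    (v : V → ℝ) (hv : v ≠ 0) (l : ℝ)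
    (heig : G.lapMatrix ℝ *ᵥ v = l • v)
    (htri : ∀ i, v i = -1 ∨ v i = 0 ∨ v i = 1)
    (hnel : ∀ i j, G.Adj i j → v i ≠ v j)
    (j : V) (hj : v j = 1 ∨ v j = -1) :
    l = (G.degree j : ℝ) + (((G.neighborFinset j).filter fun k => v k ≠ 0).card : ℝ) :=
  trivalent_nonsoft_eigenvalue_general G v l heig htri hnel j hj
end

section
/- Let G be a connected graph with an eigenvector v of L(G) whose entries all lie in {-1,0,1}, such that no edge joins two vertices with equal v-values, and suppose G has a vertex of degree 1 (a leaf). Then either G is the path P_2 with v = (1,-1) and λ = 2, or G is a star S_{2k+1} with center valued 0, k leaves valued +1 and k leaves valued -1, and λ = 1. -/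
open SimpleGraph Matrix Finset

/-!
Write the eigenvalue equation at a vertex `w` as `∑_{u ~ w} (v w - v u) = λ v w`. If `v w = ±1`,
multiplying by `v w` gives `∑_{u ~ w} v w (v w - v u) = λ`, and since neighbours carry values in
`{-1, 0, 1}` different from `v w`, every term is at least `1`, and equal to `2` when `v u = -v w`.
At a leaf `x` with neighbour `y` the equation forces `v x = ±1` and either `v y = 0, λ = 1` or
`v y = -v x, λ = 2`. For `λ = 1` every neighbour of `y` is a leaf, so by connectedness `G` is a
star centred at `y`, and the equation at `y` says that the leaf values sum to zero. For `λ = 2`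
both `x` and `y` have degree at most `1`, so `G = P₂`.
-/

section Ternary

variable {ι : Type*} [Fintype ι] {v : ι → ℝ}

theorem sum_eq_card_filter_eq_one_sub_card_filter_eq_neg_one
    (htri : ∀ i, v i = -1 ∨ v i = 0 ∨ v i = 1) :
    ∑ i, v i = #{i | v i = 1} - #{i | v i = -1} := by
  rw [natCast_card_filter, natCast_card_filter, ← sum_sub_distrib]
  refine sum_congr rfl fun i _ => ?_
  rcases htri i with h | h | h <;> norm_num [h]

theorem card_eq_card_filter_add_card_filter_add_card_filter
    (htri : ∀ i, v i = -1 ∨ v i = 0 ∨ v i = 1) :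
    Fintype.card ι = #{i | v i = 1} + #{i | v i = -1} + #{i | v i = 0} := by
  rw [card_filter, card_filter, card_filter, ← sum_add_distrib, ← sum_add_distrib,
    Fintype.card_eq_sum_ones]
  refine sum_congr rfl fun i _ => ?_
  rcases htri i with h | h | h <;> norm_num [h]

theorem one_le_mul_sub_of_ne {a b : ℝ} (ha : a = 1 ∨ a = -1) (hb : b = -1 ∨ b = 0 ∨ b = 1)
    (hab : a ≠ b) : 1 ≤ a * (a - b) := by
  rcases ha with rfl | rfl <;> rcases hb with rfl | rfl | rfl <;> (norm_num at hab) <;> norm_num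

end Ternary

namespace SimpleGraph

variable {V : Type*} {G : SimpleGraph V}

theorem Connected.mem_of_forall_adj_mem (hG : G.Connected) {S : Set V}
    (hS : ∀ a b, a ∈ S → G.Adj a b → b ∈ S) {a : V} (ha : a ∈ S) (z : V) : z ∈ S := by
  induction (reachable_iff_reflTransGen a z).mp (hG a z) with
  | refl => exact ha
  | tail _ hbc ih => exact hS _ _ ih hbc

variable [Fintype V] [DecidableRel G.Adj]

theorem eq_of_adj_of_degree_le_one {x y z : V} (hx : G.degree x ≤ 1) (hy : G.Adj x y)
    (hz : G.Adj x z) : z = y :=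
  card_le_one.mp ((G.card_neighborFinset_eq_degree x).trans_le hx) z
    ((G.mem_neighborFinset x z).mpr hz) y ((G.mem_neighborFinset x y).mpr hy)

theorem Connected.adj_iff_of_forall_adj_degree_le_one (hG : G.Connected) {c : V}
    (hc : ∀ w, G.Adj c w → G.degree w ≤ 1) (x y : V) :
    G.Adj x y ↔ (x = c ∧ y ≠ c) ∨ (y = c ∧ x ≠ c) := by
  have hall : ∀ z, z = c ∨ G.Adj c z := by
    refine hG.mem_of_forall_adj_mem (S := {z | z = c ∨ G.Adj c z}) ?_ (Or.inl rfl)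
    rintro a b (rfl | hca) hab
    · exact Or.inr hab
    · exact Or.inl (eq_of_adj_of_degree_le_one (hc a hca) hca.symm hab)
  have adj_center : ∀ {z}, z ≠ c → G.Adj c z := fun hz => (hall _).resolve_left hz
  constructor
  · intro hxy
    by_cases hx : x = c
    · exact Or.inl ⟨hx, hx ▸ hxy.ne'⟩
    · have hcx := adj_center hx
      exact Or.inr ⟨eq_of_adj_of_degree_le_one (hc x hcx) hcx.symm hxy, hx⟩
  · rintro (⟨rfl, hy⟩ | ⟨rfl, hx⟩)
    · exact adj_center hy
    · exact (adj_center hx).symm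

theorem Connected.eq_or_eq_of_degree_le_one (hG : G.Connected) {x y : V} (hxy : G.Adj x y)
    (hx : G.degree x ≤ 1) (hy : G.degree y ≤ 1) (z : V) : z = x ∨ z = y := by
  refine hG.mem_of_forall_adj_mem (S := {z | z = x ∨ z = y}) ?_ (Or.inl rfl) z
  rintro a b (rfl | rfl) hab
  · exact Or.inr (eq_of_adj_of_degree_le_one hx hxy hab)
  · exact Or.inl (eq_of_adj_of_degree_le_one hy hxy.symm hab)

theorem lapMatrix_mulVec_apply_eq_sum_sub [DecidableEq V] {R : Type*} [NonAssocRing R]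
    (v : V → R) (i : V) :
    (G.lapMatrix R *ᵥ v) i = ∑ u ∈ G.neighborFinset i, (v i - v u) := by
  rw [lapMatrix_mulVec_apply, sum_sub_distrib, sum_const, card_neighborFinset_eq_degree,
    nsmul_eq_mul]

section Eigenvector

variable [DecidableEq V] {v : V → ℝ} {l : ℝ}

theorem sum_neighborFinset_sub_eq_of_eigen (heig : G.lapMatrix ℝ *ᵥ v = l • v) (i : V) :
    ∑ u ∈ G.neighborFinset i, (v i - v u) = l * v i := by
  simpa [lapMatrix_mulVec_apply_eq_sum_sub] using congrFun heig i

theorem sum_neighborFinset_mul_sub_eq_of_eigen (heig : G.lapMatrix ℝ *ᵥ v = l • v) {w : V}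
    (hw : v w = 1 ∨ v w = -1) :
    ∑ u ∈ G.neighborFinset w, v w * (v w - v u) = l := by
  rw [← mul_sum, sum_neighborFinset_sub_eq_of_eigen heig]
  rcases hw with h | h <;> rw [h] <;> ring

theorem degree_le_eigenvalue (heig : G.lapMatrix ℝ *ᵥ v = l • v)
    (htri : ∀ i, v i = -1 ∨ v i = 0 ∨ v i = 1) (hnel : ∀ i j, G.Adj i j → v i ≠ v j) {w : V}
    (hw : v w = 1 ∨ v w = -1) : (G.degree w : ℝ) ≤ l := by
  have h := card_nsmul_le_sum (G.neighborFinset w) (fun u => v w * (v w - v u)) 1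
    fun u hu => one_le_mul_sub_of_ne hw (htri u) (hnel w u ((G.mem_neighborFinset w u).mp hu))
  rwa [sum_neighborFinset_mul_sub_eq_of_eigen heig hw, card_neighborFinset_eq_degree,
    nsmul_one] at h

theorem degree_add_one_le_eigenvalue (heig : G.lapMatrix ℝ *ᵥ v = l • v)
    (htri : ∀ i, v i = -1 ∨ v i = 0 ∨ v i = 1) (hnel : ∀ i j, G.Adj i j → v i ≠ v j) {w x : V}
    (hw : v w = 1 ∨ v w = -1) (hwx : G.Adj w x) (hvx : v x = -v w) :
    (G.degree w : ℝ) + 1 ≤ l := by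
  have hx : x ∈ G.neighborFinset w := (G.mem_neighborFinset w x).mpr hwx
  have hterm_x : v w * (v w - v x) = 2 := by
    rw [hvx]; rcases hw with h | h <;> rw [h] <;> norm_num
  have hrest := card_nsmul_le_sum ((G.neighborFinset w).erase x) (fun u => v w * (v w - v u)) 1
    fun u hu => one_le_mul_sub_of_ne hw (htri u)
      (hnel w u ((G.mem_neighborFinset w u).mp (mem_of_mem_erase hu)))
  have hsum := sum_neighborFinset_mul_sub_eq_of_eigen heig hw
  rw [← add_sum_erase _ _ hx, hterm_x] at hsum
  rw [nsmul_one] at hrest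
  rw [← card_neighborFinset_eq_degree, ← card_erase_add_one hx]
  push_cast
  linarith

theorem values_of_eigen_of_neighborFinset_eq_singleton (heig : G.lapMatrix ℝ *ᵥ v = l • v)
    (htri : ∀ i, v i = -1 ∨ v i = 0 ∨ v i = 1) (hnel : ∀ i j, G.Adj i j → v i ≠ v j) {x y : V}
    (hx : G.neighborFinset x = {y}) :
    (v x = 1 ∨ v x = -1) ∧ (v y = 0 ∧ l = 1 ∨ v y = -v x ∧ l = 2) := by
  have hne := hnel x y ((G.mem_neighborFinset x y).mp (hx ▸ mem_singleton_self y))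
  have heq := sum_neighborFinset_sub_eq_of_eigen heig x
  rw [hx, sum_singleton] at heq
  rcases htri x with h | h | h <;> rcases htri y with h' | h' | h' <;> rw [h, h'] at hne heq <;>
    first | exact absurd rfl hne | ((norm_num at heq) <;> norm_num [h, h'] <;> linarith)

theorem balanced_star_of_eigenvalue_one (hG : G.Connected)
    (heig : G.lapMatrix ℝ *ᵥ v = (1 : ℝ) • v)
    (htri : ∀ i, v i = -1 ∨ v i = 0 ∨ v i = 1) (hnel : ∀ i j, G.Adj i j → v i ≠ v j) {c : V}
    (hc : v c = 0) :
    ∃ k : ℕ, (∀ x y, G.Adj x y ↔ (x = c ∧ y ≠ c) ∨ (y = c ∧ x ≠ c)) ∧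
      (∀ x, x ≠ c → v x = 1 ∨ v x = -1) ∧
      #{x | v x = 1} = k ∧ #{x | v x = -1} = k ∧ Fintype.card V = 2 * k + 1 := by
  have hval : ∀ w, G.Adj c w → v w = 1 ∨ v w = -1 := fun w hw => by
    have hne := hnel c w hw
    rcases htri w with h | h | h <;> simp_all
  have hadj := hG.adj_iff_of_forall_adj_degree_le_one fun w hw => by
    exact_mod_cast degree_le_eigenvalue heig htri hnel (hval w hw)
  have hvals : ∀ x, x ≠ c → v x = 1 ∨ v x = -1 :=
    fun x hx => hval x ((hadj c x).mpr (Or.inl ⟨rfl, hx⟩))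
  have hzero : #{x | v x = 0} = 1 := by
    refine card_eq_one.mpr ⟨c, ext fun x => ?_⟩
    by_cases hx : x = c
    · simp [hx, hc]
    · rcases hvals x hx with h | h <;> simp [h, hx]
  have hsum : ∑ x, v x = 0 := by
    have heq := sum_neighborFinset_sub_eq_of_eigen heig c
    have hN : G.neighborFinset c = univ.erase c := by ext x; simp [hadj]
    simp only [hN, hc, zero_sub, sum_neg_distrib, mul_zero, neg_eq_zero] at heq
    rw [← add_sum_erase _ _ (mem_univ c), hc, heq, add_zero]
  have hbal : #{x | v x = 1} = #{x | v x = -1} := by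
    have h := sum_eq_card_filter_eq_one_sub_card_filter_eq_neg_one htri
    rw [hsum] at h
    exact_mod_cast (sub_eq_zero.mp h.symm)
  refine ⟨_, hadj, hvals, rfl, hbal.symm, ?_⟩
  rw [card_eq_card_filter_add_card_filter_add_card_filter htri, hzero, ← hbal]
  ring

end Eigenvector

end SimpleGraph

theorem graph_with_leaf_general {V : Type*} [Fintype V] [DecidableEq V]
    (G : SimpleGraph V) [DecidableRel G.Adj] (hconn : G.Connected)
    (v : V → ℝ) (l : ℝ)
    (heig : G.lapMatrix ℝ *ᵥ v = l • v)
    (htri : ∀ i, v i = -1 ∨ v i = 0 ∨ v i = 1)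
    (hnel : ∀ i j, G.Adj i j → v i ≠ v j)
    (hleaf : ∃ x, G.degree x = 1) :
    (∃ a b : V, a ≠ b ∧ (∀ x, x = a ∨ x = b) ∧
      (∀ x y, G.Adj x y ↔ (x = a ∧ y = b) ∨ (x = b ∧ y = a)) ∧
      (v a = 1 ∨ v a = -1) ∧ v b = -v a ∧ l = 2) ∨
    (∃ (c : V) (k : ℕ), v c = 0 ∧
      (∀ x y, G.Adj x y ↔ (x = c ∧ y ≠ c) ∨ (y = c ∧ x ≠ c)) ∧
      (∀ x, x ≠ c → v x = 1 ∨ v x = -1) ∧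
      (Finset.univ.filter fun x => v x = 1).card = k ∧
      (Finset.univ.filter fun x => v x = -1).card = k ∧
      Fintype.card V = 2 * k + 1 ∧ l = 1) := by
  obtain ⟨x, hx⟩ := hleaf
  obtain ⟨y, hNx⟩ := card_eq_one.mp ((G.card_neighborFinset_eq_degree x).trans hx)
  have hxy : G.Adj x y := (G.mem_neighborFinset x y).mp (hNx ▸ mem_singleton_self y)
  obtain ⟨hvx, ⟨hvy, rfl⟩ | ⟨hvy, rfl⟩⟩ :=
    values_of_eigen_of_neighborFinset_eq_singleton heig htri hnel hNx
  · obtain ⟨k, hadj, hvals, hpos, hneg, hcard⟩ :=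
      balanced_star_of_eigenvalue_one hconn heig htri hnel hvy
    exact Or.inr ⟨y, k, hvy, hadj, hvals, hpos, hneg, hcard, rfl⟩
  · have hdeg : ∀ {a b}, G.Adj a b → (v a = 1 ∨ v a = -1) → v b = -v a → G.degree a ≤ 1 :=
      fun hab ha hb => by
        have := degree_add_one_le_eigenvalue heig htri hnel ha hab hb
        exact_mod_cast (by linarith : (G.degree _ : ℝ) ≤ 1)
    have hvy' : v y = 1 ∨ v y = -1 := by rcases hvx with h | h <;> simp [hvy, h]
    have hall := hconn.eq_or_eq_of_degree_le_one hxy (hdeg hxy hvx hvy)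
      (hdeg hxy.symm hvy' (by rw [hvy, neg_neg]))
    refine Or.inl ⟨x, y, hxy.ne, hall, fun p q => ?_, hvx, hvy, rfl⟩
    rcases hall p with rfl | rfl <;> rcases hall q with rfl | rfl <;>
      simp [hxy, hxy.symm, hxy.ne, hxy.ne']

/-- **Graph with a leaf.** A connected bivalent or trivalent graph without equal links
that has a leaf is either the path `P₂` (with `v = (1,-1)` up to sign and `λ = 2`) or a
star `S_{2k+1}` with soft center, `k` leaves valued `+1`, `k` leaves valued `-1`, and `λ = 1`. -/
theorem graph_with_leaf {V : Type*} [Fintype V] [DecidableEq V]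
    (G : SimpleGraph V) [DecidableRel G.Adj] (hconn : G.Connected)
    (v : V → ℝ) (hv : v ≠ 0) (l : ℝ)
    (heig : G.lapMatrix ℝ *ᵥ v = l • v)
    (htri : ∀ i, v i = -1 ∨ v i = 0 ∨ v i = 1)
    (hnel : ∀ i j, G.Adj i j → v i ≠ v j)
    (hleaf : ∃ x, G.degree x = 1) :
    (∃ a b : V, a ≠ b ∧ (∀ x, x = a ∨ x = b) ∧
      (∀ x y, G.Adj x y ↔ (x = a ∧ y = b) ∨ (x = b ∧ y = a)) ∧
      (v a = 1 ∨ v a = -1) ∧ v b = -v a ∧ l = 2) ∨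
    (∃ (c : V) (k : ℕ), v c = 0 ∧
      (∀ x y, G.Adj x y ↔ (x = c ∧ y ≠ c) ∨ (y = c ∧ x ≠ c)) ∧
      (∀ x, x ≠ c → v x = 1 ∨ v x = -1) ∧
      (Finset.univ.filter fun x => v x = 1).card = k ∧
      (Finset.univ.filter fun x => v x = -1).card = k ∧
      Fintype.card V = 2 * k + 1 ∧ l = 1) :=
  graph_with_leaf_general G hconn v l heig htri hnel hleaf
end

section
/- Let T be a tree with an eigenvector v of L(T) whose entries all lie in {-1,0,1} and take the value 0 somewhere, and such that no edge joins two equal-valued vertices. Then T is a star S_{2k+1} with soft center and the eigenvalue is 1. -/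
/-! At a vertex `a` with `v a ≠ 0` every nonzero neighbour carries `-v a`, so the row of `a` in
the eigenvalue equation reads `l = deg a + m a`, where `m a` counts the nonzero neighbours of `a`.
A tree with a nonzero vertex and a soft one has a leaf, and a leaf cannot be soft, so `l ≤ 2`.
Two adjacent nonzero vertices would then both be leaves and make up the whole tree, which has a
soft vertex; hence `m = 0`, `l` is the degree of every nonzero vertex, and the leaf gives `l = 1`.
The neighbours of a soft vertex `c` are thus leaves, so the tree is the star centred at `c`, and
the row of `c` says that the `±1` values of the leaves sum to `0`: there are evenly many. -/

open SimpleGraph Matrix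

theorem Finset.card_eq_two_mul_card_filter_of_sum_eq_zero {ι : Type*} {s : Finset ι} {f : ι → ℝ}
    (hf : ∀ i ∈ s, f i = -1 ∨ f i = 1) (hs : ∑ i ∈ s, f i = 0) :
    s.card = 2 * (s.filter (f · = 1)).card := by
  have key : (s.card : ℝ) = 2 * (s.filter (f · = 1)).card :=
    calc (s.card : ℝ) = ∑ i ∈ s, (1 + f i) := by simp [Finset.sum_add_distrib, hs]
      _ = ∑ i ∈ s, 2 * if f i = 1 then (1 : ℝ) else 0 :=
        Finset.sum_congr rfl fun i hi => by rcases hf i hi with h | h <;> norm_num [h]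
      _ = 2 * (s.filter (f · = 1)).card := by rw [← Finset.mul_sum, Finset.sum_boole]
  exact_mod_cast key

namespace SimpleGraph

variable {V : Type*} {G : SimpleGraph V} {v : V → ℝ} {l : ℝ}

theorem Connected.isUniversal_of_forall_adj_degree_eq_one [G.LocallyFinite] (hG : G.Connected)
    {c : V} (h : ∀ y, G.Adj c y → G.degree y = 1) : G.IsUniversal c := by
  intro x hcx
  suffices ∀ x, x = c ∨ G.Adj c x from (this x).resolve_left hcx.symm
  intro x
  induction (reachable_iff_reflTransGen c x).mp (hG c x) with
  | refl => exact .inl rfl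
  | @tail y z _ hyz ih =>
    rcases ih with rfl | hcy
    · exact .inr hyz
    · obtain ⟨w, -, hw⟩ := degree_eq_one_iff_existsUnique_adj.mp (h y hcy)
      exact .inl ((hw z hyz).trans (hw c hcy.symm).symm)

theorem Connected.eq_starGraph_of_forall_adj_degree_eq_one [G.LocallyFinite] (hG : G.Connected)
    {c : V} (h : ∀ y, G.Adj c y → G.degree y = 1) : G = starGraph c := by
  have hc := hG.isUniversal_of_forall_adj_degree_eq_one h
  ext x y
  rw [starGraph_adj]
  constructor
  · intro hxy
    refine ⟨hxy.ne, or_iff_not_imp_left.mpr fun hxc => ?_⟩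
    have hcx := hc (Ne.symm hxc)
    obtain ⟨w, -, hw⟩ := degree_eq_one_iff_existsUnique_adj.mp (h x hcx)
    exact (hw y hxy).trans (hw c hcx.symm).symm
  · rintro ⟨hxy, rfl | rfl⟩
    · exact hc hxy
    · exact (hc hxy.symm).symm

theorem apply_eq_zero_or_eq_neg_of_adj (htri : ∀ i, v i = -1 ∨ v i = 0 ∨ v i = 1)
    (hnel : ∀ i j, G.Adj i j → v i ≠ v j) {a b : V} (hab : G.Adj a b) (ha : v a ≠ 0) :
    v b = 0 ∨ v b = -v a := by
  have := hnel a b hab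
  rcases htri a with h | h | h <;> rcases htri b with h' | h' | h' <;> simp_all

section TrivalentEigenvector

variable [Fintype V] [DecidableEq V] [DecidableRel G.Adj]

theorem degree_mul_sub_sum_eq_of_lapMatrix_mulVec_eq_smul (heig : G.lapMatrix ℝ *ᵥ v = l • v)
    (a : V) : G.degree a * v a - ∑ u ∈ G.neighborFinset a, v u = l * v a := by
  simpa [lapMatrix_mulVec_apply] using congrFun heig a

theorem apply_ne_zero_of_degree_eq_one (heig : G.lapMatrix ℝ *ᵥ v = l • v)
    (hnel : ∀ i j, G.Adj i j → v i ≠ v j) {a : V} (ha : G.degree a = 1) : v a ≠ 0 := by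
  intro hva
  obtain ⟨b, hb⟩ := Finset.card_eq_one.mp ha
  have hab : G.Adj a b := (G.mem_neighborFinset a b).mp (hb ▸ Finset.mem_singleton_self b)
  have hrow := degree_mul_sub_sum_eq_of_lapMatrix_mulVec_eq_smul heig a
  rw [hb, Finset.sum_singleton, hva] at hrow
  exact hnel a b hab (by linarith)

theorem eq_degree_add_card_filter_ne_zero (heig : G.lapMatrix ℝ *ᵥ v = l • v)
    (htri : ∀ i, v i = -1 ∨ v i = 0 ∨ v i = 1) (hnel : ∀ i j, G.Adj i j → v i ≠ v j)
    {a : V} (ha : v a ≠ 0) :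
    l = G.degree a + ((G.neighborFinset a).filter (v · ≠ 0)).card := by
  have hsum : ∑ u ∈ G.neighborFinset a, v u =
      -(((G.neighborFinset a).filter (v · ≠ 0)).card * v a) := by
    rw [← Finset.sum_filter_ne_zero, ← nsmul_eq_mul, ← Finset.sum_const, ← Finset.sum_neg_distrib]
    refine Finset.sum_congr rfl fun u hu => ?_
    rw [Finset.mem_filter, mem_neighborFinset] at hu
    exact (apply_eq_zero_or_eq_neg_of_adj htri hnel hu.1 ha).resolve_left hu.2
  have hrow := degree_mul_sub_sum_eq_of_lapMatrix_mulVec_eq_smul heig a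
  rw [hsum] at hrow
  refine mul_right_cancel₀ ha ?_
  rw [add_mul]
  linarith

theorem le_two_mul_degree_of_apply_ne_zero (heig : G.lapMatrix ℝ *ᵥ v = l • v)
    (htri : ∀ i, v i = -1 ∨ v i = 0 ∨ v i = 1) (hnel : ∀ i j, G.Adj i j → v i ≠ v j)
    {a : V} (ha : v a ≠ 0) : l ≤ 2 * G.degree a := by
  have hm : ((G.neighborFinset a).filter (v · ≠ 0)).card ≤ G.degree a :=
    (Finset.card_filter_le _ _).trans_eq (G.card_neighborFinset_eq_degree a)
  rw [eq_degree_add_card_filter_ne_zero heig htri hnel ha]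
  have hm' : (((G.neighborFinset a).filter (v · ≠ 0)).card : ℝ) ≤ G.degree a := by
    exact_mod_cast hm
  linarith

theorem degree_eq_one_of_adj_of_apply_ne_zero (heig : G.lapMatrix ℝ *ᵥ v = l • v)
    (htri : ∀ i, v i = -1 ∨ v i = 0 ∨ v i = 1) (hnel : ∀ i j, G.Adj i j → v i ≠ v j)
    (hl : l ≤ 2) {a b : V} (hab : G.Adj a b) (ha : v a ≠ 0) (hb : v b ≠ 0) :
    G.degree a = 1 := by
  have hm : 0 < ((G.neighborFinset a).filter (v · ≠ 0)).card :=
    Finset.card_pos.mpr ⟨b, by simp [hab, hb]⟩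
  have hd : 0 < G.degree a := (G.degree_pos_iff_exists_adj a).mpr ⟨b, hab⟩
  rw [eq_degree_add_card_filter_ne_zero heig htri hnel ha] at hl
  have : G.degree a + ((G.neighborFinset a).filter (v · ≠ 0)).card ≤ 2 := by exact_mod_cast hl
  omega

theorem apply_eq_zero_of_adj_of_apply_ne_zero (heig : G.lapMatrix ℝ *ᵥ v = l • v)
    (htri : ∀ i, v i = -1 ∨ v i = 0 ∨ v i = 1) (hnel : ∀ i j, G.Adj i j → v i ≠ v j)
    (hG : G.Connected) {c : V} (hc : v c = 0) (hl : l ≤ 2) {a b : V} (hab : G.Adj a b)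
    (ha : v a ≠ 0) : v b = 0 := by
  by_contra hb
  obtain ⟨w, -, hw⟩ := degree_eq_one_iff_existsUnique_adj.mp
    (degree_eq_one_of_adj_of_apply_ne_zero heig htri hnel hl hab ha hb)
  have hwb : b = w := hw b hab
  have hdegb := degree_eq_one_of_adj_of_apply_ne_zero heig htri hnel hl hab.symm hb ha
  have huniv : G.IsUniversal a :=
    hG.isUniversal_of_forall_adj_degree_eq_one fun y hay => by rw [hw y hay, ← hwb]; exact hdegb
  have hac : a ≠ c := by rintro rfl; exact ha hc
  exact hb (by rwa [hwb, ← hw c (huniv hac)])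

theorem eq_degree_of_apply_ne_zero (heig : G.lapMatrix ℝ *ᵥ v = l • v)
    (htri : ∀ i, v i = -1 ∨ v i = 0 ∨ v i = 1) (hnel : ∀ i j, G.Adj i j → v i ≠ v j)
    (hG : G.Connected) {c : V} (hc : v c = 0) (hl : l ≤ 2) {a : V} (ha : v a ≠ 0) :
    l = G.degree a := by
  have hm : (G.neighborFinset a).filter (v · ≠ 0) = ∅ :=
    Finset.filter_eq_empty_iff.mpr fun u hu => not_not.mpr <|
      apply_eq_zero_of_adj_of_apply_ne_zero heig htri hnel hG hc hl
        ((G.mem_neighborFinset a u).mp hu) ha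
  simpa [hm] using eq_degree_add_card_filter_ne_zero heig htri hnel ha

theorem exists_card_eq_two_mul_add_one_of_isUniversal (heig : G.lapMatrix ℝ *ᵥ v = l • v)
    (htri : ∀ i, v i = -1 ∨ v i = 0 ∨ v i = 1) (hnel : ∀ i j, G.Adj i j → v i ≠ v j)
    {c : V} (hc : v c = 0) (huniv : G.IsUniversal c) : ∃ k, Fintype.card V = 2 * k + 1 := by
  have hcard : Fintype.card V = G.degree c + 1 := by
    have := (G.degree_eq_card_sub_one c).mpr huniv
    have := Fintype.card_pos_iff.mpr ⟨c⟩
    omega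
  have hsum : ∑ y ∈ G.neighborFinset c, v y = 0 := by
    simpa [hc] using degree_mul_sub_sum_eq_of_lapMatrix_mulVec_eq_smul heig c
  have hpm : ∀ y ∈ G.neighborFinset c, v y = -1 ∨ v y = 1 := fun y hy => by
    have := hnel c y ((G.mem_neighborFinset c y).mp hy)
    rcases htri y with h | h | h <;> simp_all
  rw [← card_neighborFinset_eq_degree,
    Finset.card_eq_two_mul_card_filter_of_sum_eq_zero hpm hsum] at hcard
  exact ⟨_, hcard⟩

end TrivalentEigenvector

end SimpleGraph

/-- A trivalent tree without equal links whose eigenvector vanishes somewhere is a star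
`S_{2k+1}` with soft center, and the eigenvalue is `1`. -/
theorem trivalent_tree_star {V : Type*} [Fintype V] [DecidableEq V]
    (G : SimpleGraph V) [DecidableRel G.Adj] (hT : G.IsTree)
    (v : V → ℝ) (hv : v ≠ 0) (l : ℝ)
    (heig : G.lapMatrix ℝ *ᵥ v = l • v)
    (htri : ∀ i, v i = -1 ∨ v i = 0 ∨ v i = 1)
    (hsoft : ∃ i, v i = 0)
    (hnel : ∀ i j, G.Adj i j → v i ≠ v j) :
    ∃ (c : V) (k : ℕ), v c = 0 ∧ Fintype.card V = 2 * k + 1 ∧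
      (∀ x y, G.Adj x y ↔ (x = c ∧ y ≠ c) ∨ (y = c ∧ x ≠ c)) ∧ l = 1 := by
  obtain ⟨c, hc⟩ := hsoft
  obtain ⟨a, ha⟩ : ∃ a, v a ≠ 0 := Function.ne_iff.mp hv
  have : Nontrivial V := nontrivial_of_ne c a (by rintro rfl; exact ha hc)
  obtain ⟨u, hu⟩ := hT.exists_vert_degree_one_of_nontrivial
  have hu0 := apply_ne_zero_of_degree_eq_one heig hnel hu
  have hl2 : l ≤ 2 := by simpa [hu] using le_two_mul_degree_of_apply_ne_zero heig htri hnel hu0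
  have hl : l = 1 := by
    simpa [hu] using eq_degree_of_apply_ne_zero heig htri hnel hT.connected hc hl2 hu0
  have hnbr : ∀ y, G.Adj c y → v y ≠ 0 := fun y hcy hy => hnel c y hcy (hc.trans hy.symm)
  have hleaf : ∀ y, G.Adj c y → G.degree y = 1 := fun y hcy => by
    have := eq_degree_of_apply_ne_zero heig htri hnel hT.connected hc hl2 (hnbr y hcy)
    exact_mod_cast hl ▸ this.symm
  obtain ⟨k, hk⟩ := exists_card_eq_two_mul_add_one_of_isUniversal heig htri hnel hc
    (hT.connected.isUniversal_of_forall_adj_degree_eq_one hleaf)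
  refine ⟨c, k, hc, hk, fun x y => ?_, hl⟩
  rw [hT.connected.eq_starGraph_of_forall_adj_degree_eq_one hleaf, starGraph_adj]
  grind
end

section
/- Let G be a connected unicyclic graph (connected with exactly n edges on n vertices) with an eigenvector v of L(G) with entries in {-1,0,1} and no edge joining equal-valued vertices. Then G is a cycle, and one of the following holds: G = C_{4k} with λ = 2 and eigenvector pattern (1,0,-1,0) repeated; G = C_{3k} with λ = 3 and pattern (1,0,-1) repeated; or G = C_{2k} with λ = 4 and pattern (1,-1) repeated. -/
open SimpleGraph Matrix Finset

/-!
On a vertex valued `±1` the eigenvalue equation reads `l = deg x + #(neighbours of the opposite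
sign)`, and around a vertex valued `0` the neighbours valued `1` and `-1` balance. Hence there is
no leaf: a leaf valued `1` forces either `l = 1`, contradicting
`#E ≤ vᵀ L v = l · #{v ≠ 0} < n` (adjacent values differ by at least one), or `l = 2` with a
second leaf as its neighbour, i.e. an isolated edge. With `n` edges and minimum degree `2`, `G`
is `2`-regular, hence a cycle. Along the cycle the eigenvalue equation becomes the recurrence
`w (i - 1) + w (i + 1) = (2 - l) w i`, so starting from a vertex valued `1` everything is
determined by the two neighbouring values in `{0, -1}`; this gives the three patterns, and
closing up the cycle forces the divisibility of its length.
-/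

theorem eq_of_recurrence {a b : ℕ → ℝ} {c : ℝ} (ha : ∀ k, a (k + 2) = c * a (k + 1) - a k)
    (hb : ∀ k, b (k + 2) = c * b (k + 1) - b k) (h0 : a 0 = b 0) (h1 : a 1 = b 1) : a = b := by
  suffices h : ∀ k, a k = b k ∧ a (k + 1) = b (k + 1) from funext fun k => (h k).1
  intro k
  induction k with
  | zero => exact ⟨h0, h1⟩
  | succ k ih => exact ⟨ih.2, by rw [ha, hb, ih.1, ih.2]⟩

open Fin.NatCast in
theorem Fin.apply_eq_of_recurrence {n : ℕ} [NeZero n] {w : Fin n → ℝ} {c : ℝ}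
    {p : ℕ → ℝ} (hw : ∀ i, w (i - 1) + w (i + 1) = c * w i)
    (hp : ∀ k, p (k + 2) = c * p (k + 1) - p k) (h0 : w 0 = p 0) (h1 : w 1 = p 1) :
    (∀ i : Fin n, w i = p i) ∧ p n = p 0 := by
  have hseq : (fun k : ℕ => w (Nat.cast k)) = p := by
    refine eq_of_recurrence (fun k => ?_) hp (by simpa using h0) (by simpa using h1)
    have := hw (k + 1)
    push_cast
    simp only [add_sub_cancel_right, add_assoc, one_add_one_eq_two] at this ⊢
    linarith
  exact ⟨fun i => by simp [← hseq], by simp [← hseq]⟩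

def signPattern (m k : ℕ) : ℝ := if k % m = 0 then 1 else if k % m = 2 then -1 else 0

def altPattern (k : ℕ) : ℝ := if k % 2 = 0 then 1 else -1

theorem signPattern_eq_one_iff {m k : ℕ} : signPattern m k = 1 ↔ k % m = 0 := by
  unfold signPattern
  split_ifs <;> norm_num [*]

theorem altPattern_eq_one_iff {k : ℕ} : altPattern k = 1 ↔ k % 2 = 0 := by
  unfold altPattern
  split_ifs <;> norm_num [*]

-- The coefficients are `2 - l` for `l = 2, 3, 4`, as in the recurrence along a cycle.
theorem signPattern_four_add_two (k : ℕ) :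
    signPattern 4 (k + 2) = (2 - 2) * signPattern 4 (k + 1) - signPattern 4 k := by
  unfold signPattern
  have := Nat.mod_lt k (show 4 > 0 by norm_num)
  interval_cases h : k % 4 <;> simp [Nat.add_mod, h]

theorem signPattern_three_add_two (k : ℕ) :
    signPattern 3 (k + 2) = (2 - 3) * signPattern 3 (k + 1) - signPattern 3 k := by
  unfold signPattern
  have := Nat.mod_lt k (show 3 > 0 by norm_num)
  interval_cases h : k % 3 <;> simp [Nat.add_mod, h] <;> norm_num

theorem altPattern_add_two (k : ℕ) :
    altPattern (k + 2) = (2 - 4) * altPattern (k + 1) - altPattern k := by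
  unfold altPattern
  have := Nat.mod_lt k (show 2 > 0 by norm_num)
  interval_cases h : k % 2 <;> simp [Nat.add_mod, h] <;> norm_num

namespace SimpleGraph

section Cycles

variable {V W : Type*} [Fintype V] [Fintype W] {G : SimpleGraph V} {H : SimpleGraph W}

theorem Hom.nonempty_iso_of_bijective_of_degree_le [DecidableRel G.Adj] [DecidableRel H.Adj]
    [DecidableEq V] (f : H →g G) (hf : Function.Bijective f)
    (hdeg : ∀ a, G.degree (f a) ≤ H.degree a) : Nonempty (H ≃g G) := by
  refine ⟨⟨Equiv.ofBijective f hf, fun {a b} => ⟨fun hab => ?_, f.map_adj⟩⟩⟩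
  have himage : (H.neighborFinset a).image f = G.neighborFinset (f a) := by
    refine eq_of_subset_of_card_le (fun u hu => ?_) ?_
    · obtain ⟨b, hb, rfl⟩ := mem_image.1 hu
      exact (mem_neighborFinset _ _ _).2 (f.map_adj ((mem_neighborFinset _ _ _).1 hb))
    · rw [card_image_of_injective _ hf.1, card_neighborFinset_eq_degree,
        card_neighborFinset_eq_degree]
      exact hdeg a
  obtain ⟨b', hb', hfb⟩ := mem_image.1 (himage ▸ (mem_neighborFinset _ _ _).2 hab)
  exact (mem_neighborFinset _ _ _).1 (hf.1 hfb ▸ hb')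

theorem cycleGraph_degree {n : ℕ} (hn : 3 ≤ n) (i : Fin n) : (cycleGraph n).degree i = 2 := by
  obtain ⟨m, rfl⟩ : ∃ m, n = m + 3 := ⟨n - 3, by omega⟩
  exact cycleGraph_degree_three_le

theorem cycleGraph_adj_zero_neg_one {n : ℕ} [NeZero n] (hn : 1 < n) :
    (cycleGraph n).Adj 0 (-1) :=
  cycleGraph_adj'.2 (.inl (by simp [Nat.mod_eq_of_lt hn]))

def cycleGraph.subRight {n : ℕ} [NeZero n] (c : Fin n) : cycleGraph n ≃g cycleGraph n where
  toEquiv := Equiv.subRight c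
  map_rel_iff' := by simp [cycleGraph_adj']

def cycleGraph.neg (n : ℕ) [NeZero n] : cycleGraph n ≃g cycleGraph n where
  toEquiv := Equiv.neg (Fin n)
  map_rel_iff' := by simp [cycleGraph_adj', neg_add_eq_sub, or_comm]

theorem cycleGraph.exists_iso_eq_zero_eq_one {n : ℕ} [NeZero n] {i j : Fin n}
    (h : (cycleGraph n).Adj i j) :
    ∃ σ : cycleGraph n ≃g cycleGraph n, σ i = 0 ∧ σ j = 1 := by
  have hone : (1 : Fin n).val = 1 := by
    rw [Fin.val_one', Nat.mod_eq_of_lt]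
    by_contra
    obtain rfl : n = 1 := by have := NeZero.ne n; omega
    exact cycleGraph_one_adj h
  rcases cycleGraph_adj'.1 h with hij | hji
  · refine ⟨(subRight i).trans (neg n), by simp [subRight, neg], ?_⟩
    simpa [subRight, neg] using Fin.ext (hij.trans hone.symm)
  · exact ⟨subRight i, by simp [subRight], Fin.ext (hji.trans hone.symm)⟩

theorem Connected.exists_isHamiltonianCycle_of_degree_eq_two [DecidableRel G.Adj]
    [DecidableEq V] (hconn : G.Connected) (hdeg : ∀ x, G.degree x = 2) (x : V) :
    ∃ p : G.Walk x x, p.IsHamiltonianCycle := by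
  have hcyc : G.IsCycles := fun y _ => by
    rw [Set.ncard_eq_toFinset_card', ← neighborFinset_def, card_neighborFinset_eq_degree, hdeg]
  obtain ⟨p, hp, hverts⟩ := hcyc.exists_cycle_toSubgraph_verts_eq_connectedComponentSupp
    (c := G.connectedComponentMk x) rfl (G.degree_pos_iff_nonempty.1 (by rw [hdeg]; omega))
  have hsupp (y : V) : y ∈ p.support := by
    rw [← p.mem_verts_toSubgraph, hverts, ConnectedComponent.mem_supp_iff,
      ConnectedComponent.eq]
    exact hconn.preconnected y x
  refine ⟨p, hp, hp.isPath_tail.isHamiltonian_of_mem fun y => ?_⟩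
  have hy := hsupp y
  rw [← p.cons_tail_support, List.mem_cons] at hy
  rw [p.support_tail_of_not_nil hp.not_nil]
  rcases hy with rfl | hy
  · exact p.end_mem_tail_support hp.not_nil
  · exact hy

theorem Connected.nonempty_iso_cycleGraph_of_degree_eq_two [DecidableRel G.Adj]
    [DecidableEq V] (hconn : G.Connected) (hdeg : ∀ x, G.degree x = 2) :
    Nonempty (G ≃g cycleGraph (Fintype.card V)) := by
  obtain ⟨x⟩ := hconn.nonempty
  obtain ⟨p, hp⟩ := hconn.exists_isHamiltonianCycle_of_degree_eq_two hdeg x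
  have hn : 3 ≤ Fintype.card V := hp.length_eq ▸ hp.three_le_length
  obtain ⟨f⟩ := (cycleGraph_isContained_iff hn).2 ⟨x, p, hp.isCycle, hp.length_eq⟩
  have hf : Function.Bijective f :=
    (Fintype.bijective_iff_injective_and_card f).2 ⟨f.injective, Fintype.card_fin _⟩
  obtain ⟨e⟩ := f.toHom.nonempty_iso_of_bijective_of_degree_le hf fun a => by
    rw [hdeg, cycleGraph_degree hn]
  exact ⟨e.symm⟩

end Cycles

section Laplacian

variable {V W : Type*} [Fintype V] [Fintype W] [DecidableEq V] [DecidableEq W]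
  {G : SimpleGraph V} {H : SimpleGraph W} [DecidableRel G.Adj] [DecidableRel H.Adj]

theorem Iso.lapMatrix_mulVec_comp_symm {R : Type*} [Ring R] (φ : G ≃g H) (v : V → R) :
    H.lapMatrix R *ᵥ (v ∘ φ.symm) = (G.lapMatrix R *ᵥ v) ∘ φ.symm := by
  ext j
  have hdeg : H.degree j = G.degree (φ.symm j) := by
    rw [← φ.degree_eq (φ.symm j), φ.apply_symm_apply]
  have hsum : ∑ u ∈ H.neighborFinset j, v (φ.symm u) =
      ∑ u ∈ G.neighborFinset (φ.symm j), v u :=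
    sum_equiv φ.symm.toEquiv (fun u => by simp [φ.symm.map_adj_iff]) fun _ _ => rfl
  simp only [lapMatrix_mulVec_apply, Function.comp_apply, hdeg, hsum]

theorem cycleGraph_lapMatrix_mulVec_apply {R : Type*} [Ring R] {n : ℕ} [NeZero n] (hn : 3 ≤ n)
    (w : Fin n → R) (i : Fin n) :
    ((cycleGraph n).lapMatrix R *ᵥ w) i = 2 * w i - (w (i - 1) + w (i + 1)) := by
  obtain ⟨m, rfl⟩ : ∃ m, n = m + 3 := ⟨n - 3, by omega⟩
  rw [lapMatrix_mulVec_apply, cycleGraph_degree_three_le, cycleGraph_neighborFinset, sum_pair]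
  · norm_num
  · rw [ne_eq, sub_eq_iff_eq_add, add_assoc, left_eq_add]
    exact ne_of_beq_false rfl

theorem sum_neighborFinset_eq_of_lapMatrix_mulVec_eq_smul {v : V → ℝ} {l : ℝ}
    (h : G.lapMatrix ℝ *ᵥ v = l • v) (x : V) :
    ∑ u ∈ G.neighborFinset x, v u = (G.degree x - l) * v x := by
  have hx := congrFun h x
  rw [lapMatrix_mulVec_apply, Pi.smul_apply, smul_eq_mul] at hx
  linarith

theorem card_edgeFinset_le_dotProduct_lapMatrix_mulVec {v : V → ℝ}
    (h : ∀ i j, G.Adj i j → 1 ≤ (v i - v j) ^ 2) :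
    (#G.edgeFinset : ℝ) ≤ v ⬝ᵥ (G.lapMatrix ℝ *ᵥ v) := by
  rw [← toLinearMap₂'_apply', lapMatrix_toLinearMap₂', le_div_iff₀ two_pos]
  calc (#G.edgeFinset : ℝ) * 2 = ∑ i, (G.degree i : ℝ) := by
        rw [← Nat.cast_sum, sum_degrees_eq_twice_card_edges]; push_cast; ring
    _ ≤ _ := by
        refine sum_le_sum fun i _ => ?_
        rw [degree_eq_sum_if_adj]
        refine sum_le_sum fun j _ => ?_
        split_ifs with hij
        · exact h i j hij
        · rfl

theorem cycleGraph.eigenvector_pattern {n : ℕ} [NeZero n] (hn : 3 ≤ n) {w : Fin n → ℝ}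
    {l : ℝ} (heig : (cycleGraph n).lapMatrix ℝ *ᵥ w = l • w) (h0 : w 0 = 1)
    (h1 : w 1 = 0 ∨ w 1 = -1) (hm1 : w (-1) = 0 ∨ w (-1) = -1) (hle : w (-1) ≤ w 1) :
    (l = 2 ∧ (∃ k, 1 ≤ k ∧ n = 4 * k) ∧ ∀ i : Fin n, w i = signPattern 4 i) ∨
    (l = 3 ∧ (∃ k, 1 ≤ k ∧ n = 3 * k) ∧ ∀ i : Fin n, w i = signPattern 3 i) ∨
    (l = 4 ∧ (∃ k, 2 ≤ k ∧ n = 2 * k) ∧ ∀ i : Fin n, w i = altPattern i) := by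
  have hrec (i : Fin n) : w (i - 1) + w (i + 1) = (2 - l) * w i := by
    have := congrFun heig i
    rw [cycleGraph_lapMatrix_mulVec_apply hn, Pi.smul_apply, smul_eq_mul] at this
    linarith
  have hl : w 1 + w (-1) = 2 - l := by simpa [h0, add_comm] using hrec 0
  rcases h1 with h1 | h1 <;> rcases hm1 with hm1 | hm1
  · obtain rfl : l = 2 := by linarith
    obtain ⟨hw, hper⟩ := Fin.apply_eq_of_recurrence hrec signPattern_four_add_two
      (by simp [h0, signPattern]) (by simp [h1, signPattern])
    have := signPattern_eq_one_iff.1 (hper.trans (by simp [signPattern]))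
    exact .inl ⟨rfl, ⟨n / 4, by omega, by omega⟩, hw⟩
  · obtain rfl : l = 3 := by linarith
    obtain ⟨hw, hper⟩ := Fin.apply_eq_of_recurrence hrec signPattern_three_add_two
      (by simp [h0, signPattern]) (by simp [h1, signPattern])
    have := signPattern_eq_one_iff.1 (hper.trans (by simp [signPattern]))
    exact .inr (.inl ⟨rfl, ⟨n / 3, by omega, by omega⟩, hw⟩)
  · linarith
  · obtain rfl : l = 4 := by linarith
    obtain ⟨hw, hper⟩ := Fin.apply_eq_of_recurrence hrec altPattern_add_two
      (by simp [h0, altPattern]) (by simp [h1, altPattern])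
    have := altPattern_eq_one_iff.1 (hper.trans (by simp [altPattern]))
    exact .inr (.inr ⟨rfl, ⟨n / 2, by omega, by omega⟩, hw⟩)

end Laplacian

section Leaves

variable {V : Type*} [Fintype V] {G : SimpleGraph V} [DecidableRel G.Adj]

theorem neighborFinset_eq_singleton_of_degree_eq_one {x y : V} (hx : G.degree x = 1)
    (hxy : G.Adj x y) : G.neighborFinset x = {y} :=
  eq_singleton_iff_unique_mem.2 ⟨(G.mem_neighborFinset x y).2 hxy, fun _ hz =>
    (degree_eq_one_iff_existsUnique_adj.1 hx).unique ((G.mem_neighborFinset _ _).1 hz) hxy⟩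

theorem Connected.three_le_card_of_card_edgeFinset_eq (hconn : G.Connected)
    (huni : #G.edgeFinset = Fintype.card V) : 3 ≤ Fintype.card V := by
  have hpos : 0 < Fintype.card V := @Fintype.card_pos _ _ hconn.nonempty
  have h := G.card_edgeFinset_le_card_choose_two
  rw [huni, Nat.choose_two_right] at h
  by_contra
  interval_cases Fintype.card V <;> omega

theorem Connected.card_le_two_of_adj_of_degree_eq_one (hconn : G.Connected) {x y : V}
    (hxy : G.Adj x y) (hx : G.degree x = 1) (hy : G.degree y = 1) : Fintype.card V ≤ 2 := by
  classical
  have hcover (z : V) : z ∈ ({x, y} : Finset V) := by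
    by_contra hz
    obtain ⟨d, -, hd, hd'⟩ :=
      (hconn.preconnected x z).some.exists_boundary_dart {x, y} (by simp) (by simpa using hz)
    have hnbr := (G.mem_neighborFinset _ _).2 d.adj
    rcases hd with hd | hd
    · rw [hd, neighborFinset_eq_singleton_of_degree_eq_one hx hxy] at hnbr
      exact hd' (.inr (mem_singleton.1 hnbr))
    · rw [Set.mem_singleton_iff.1 hd,
        neighborFinset_eq_singleton_of_degree_eq_one hy hxy.symm] at hnbr
      exact hd' (.inl (mem_singleton.1 hnbr))
  calc Fintype.card V ≤ #({x, y} : Finset V) := card_le_card fun z _ => hcover z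
    _ ≤ 2 := card_le_two

end Leaves

section Trivalent

variable {V : Type*} [Fintype V] [DecidableEq V]

structure IsTrivalentEigenvector (G : SimpleGraph V) [DecidableRel G.Adj] (v : V → ℝ)
    (l : ℝ) : Prop where
  lapMatrix_mulVec_eq : G.lapMatrix ℝ *ᵥ v = l • v
  trivalent : ∀ i, v i = -1 ∨ v i = 0 ∨ v i = 1
  ne_of_adj : ∀ i j, G.Adj i j → v i ≠ v j

namespace IsTrivalentEigenvector

variable {G : SimpleGraph V} [DecidableRel G.Adj] {v : V → ℝ} {l : ℝ}
  (hv : IsTrivalentEigenvector G v l)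
include hv

theorem neg : IsTrivalentEigenvector G (-v) l where
  lapMatrix_mulVec_eq := by rw [mulVec_neg, hv.lapMatrix_mulVec_eq, smul_neg]
  trivalent i := by rcases hv.trivalent i with h | h | h <;> simp [h]
  ne_of_adj i j hij := by simpa using hv.ne_of_adj i j hij

theorem eq_zero_or_eq_neg_one_of_adj {x y : V} (hx : v x = 1) (hxy : G.Adj x y) :
    v y = 0 ∨ v y = -1 := by
  rcases hv.trivalent y with h | h | h
  · exact .inr h
  · exact .inl h
  · exact absurd (hx.trans h.symm) (hv.ne_of_adj x y hxy)

theorem one_le_sq_sub {i j : V} (hij : G.Adj i j) : 1 ≤ (v i - v j) ^ 2 := by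
  have := sub_ne_zero.2 (hv.ne_of_adj i j hij)
  rcases hv.trivalent i with hi | hi | hi <;> rcases hv.trivalent j with hj | hj | hj <;>
    simp_all <;> norm_num

theorem sq_le_one (i : V) : v i ^ 2 ≤ 1 := by
  rcases hv.trivalent i with h | h | h <;> simp [h]

theorem degree_add_one_le {x y : V} (hx : v x = -1) (hxy : G.Adj x y) (hy : v y = 1) :
    (G.degree x : ℝ) + 1 ≤ l := by
  have hnonneg (u : V) (hu : u ∈ G.neighborFinset x) : 0 ≤ v u := by
    rcases hv.neg.eq_zero_or_eq_neg_one_of_adj (by simp [hx]) ((G.mem_neighborFinset _ _).1 hu)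
      with h | h <;> simp only [Pi.neg_apply, neg_eq_zero, neg_inj] at h <;> linarith
  have hle := single_le_sum hnonneg ((G.mem_neighborFinset x y).2 hxy)
  rw [sum_neighborFinset_eq_of_lapMatrix_mulVec_eq_smul hv.1, hx, hy] at hle
  linarith

theorem degree_ne_one_of_eq_one (hconn : G.Connected) (huni : #G.edgeFinset = Fintype.card V)
    {x : V} (hx : v x = 1) : G.degree x ≠ 1 := by
  intro hdx
  obtain ⟨y, hxy, -⟩ := degree_eq_one_iff_existsUnique_adj.1 hdx
  have hvy : v y = 1 - l := by
    simpa [neighborFinset_eq_singleton_of_degree_eq_one hdx hxy, hdx, hx] using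
      sum_neighborFinset_eq_of_lapMatrix_mulVec_eq_smul hv.1 x
  rcases hv.eq_zero_or_eq_neg_one_of_adj hx hxy with hy | hy
  · have hE := card_edgeFinset_le_dotProduct_lapMatrix_mulVec fun i j => hv.one_le_sq_sub
    rw [hv.1, dotProduct_smul, show l = 1 by linarith, one_smul, huni] at hE
    have : v ⬝ᵥ v < Fintype.card V :=
      calc v ⬝ᵥ v = ∑ i, v i ^ 2 := by simp [dotProduct, sq]
        _ < ∑ _i : V, 1 :=
          sum_lt_sum (fun i _ => hv.sq_le_one i) ⟨y, mem_univ _, by simp [hy]⟩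
        _ = Fintype.card V := by simp
    linarith
  · have hdy : G.degree y = 1 := by
      have hlt : (G.degree y : ℝ) < 2 := by linarith [hv.degree_add_one_le hy hxy.symm hx]
      have := hxy.symm.degree_pos_left
      have : G.degree y < 2 := by exact_mod_cast hlt
      omega
    have := hconn.card_le_two_of_adj_of_degree_eq_one hxy hdx hdy
    have := hconn.three_le_card_of_card_edgeFinset_eq huni
    omega

theorem degree_ne_one (hconn : G.Connected) (huni : #G.edgeFinset = Fintype.card V) (x : V) :
    G.degree x ≠ 1 := by
  rcases hv.trivalent x with h | h | h
  · exact hv.neg.degree_ne_one_of_eq_one hconn huni (by simp [h])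
  · intro hdx
    obtain ⟨y, hxy, -⟩ := degree_eq_one_iff_existsUnique_adj.1 hdx
    have hy : v y = 0 := by
      simpa [neighborFinset_eq_singleton_of_degree_eq_one hdx hxy, h] using
        sum_neighborFinset_eq_of_lapMatrix_mulVec_eq_smul hv.1 x
    exact hv.ne_of_adj x y hxy (h.trans hy.symm)
  · exact hv.degree_ne_one_of_eq_one hconn huni h

theorem degree_eq_two (hconn : G.Connected) (huni : #G.edgeFinset = Fintype.card V) (x : V) :
    G.degree x = 2 := by
  have : Nontrivial V := Fintype.one_lt_card_iff_nontrivial.1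
    (by have := hconn.three_le_card_of_card_edgeFinset_eq huni; omega)
  have hge (y : V) (_ : y ∈ univ) : 2 ≤ G.degree y := by
    have := hconn.preconnected.degree_pos_of_nontrivial y
    have := hv.degree_ne_one hconn huni y
    omega
  have hsum : ∑ _y : V, 2 = ∑ y, G.degree y := by
    rw [sum_degrees_eq_twice_card_edges, huni, sum_const, card_univ, smul_eq_mul, mul_comm]
  exact ((sum_eq_sum_iff_of_le hge).1 hsum x (mem_univ x)).symm

theorem exists_eq_one (hne : v ≠ 0) (hdeg : ∀ x, 0 < G.degree x) : ∃ x, v x = 1 := by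
  by_contra! hv1
  obtain ⟨i, hi⟩ := Function.ne_iff.1 hne
  have hi : v i = -1 := by rcases hv.trivalent i with h | h | h <;> simp_all
  obtain ⟨u, hiu⟩ := (G.degree_pos_iff_exists_adj i).1 (hdeg i)
  have hu : v u = 0 := by
    rcases hv.neg.eq_zero_or_eq_neg_one_of_adj (by simp [hi]) hiu with h | h
    · simpa using h
    · exact absurd (by simpa using h) (hv1 u)
  have hnonpos (z : V) (_ : z ∈ G.neighborFinset u) : 0 ≤ -v z := by
    rcases hv.trivalent z with h | h | h <;> simp_all
  have hle := single_le_sum hnonpos ((G.mem_neighborFinset u i).2 hiu.symm)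
  rw [sum_neg_distrib, sum_neighborFinset_eq_of_lapMatrix_mulVec_eq_smul hv.1, hu, hi] at hle
  norm_num at hle

end IsTrivalentEigenvector

end Trivalent

end SimpleGraph

/-- A connected unicyclic graph with a trivalent Laplacian eigenvector and no equal links
is a cycle: `C_{4k}` with `λ = 2` and pattern `(1,0,-1,0)`, `C_{3k}` with `λ = 3` and
pattern `(1,0,-1)`, or `C_{2k}` with `λ = 4` and pattern `(1,-1)`. -/
theorem trivalent_unicyclic {V : Type*} [Fintype V] [DecidableEq V]
    (G : SimpleGraph V) [DecidableRel G.Adj] (hconn : G.Connected)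
    (huni : G.edgeFinset.card = Fintype.card V)
    (v : V → ℝ) (hv : v ≠ 0) (l : ℝ)
    (heig : G.lapMatrix ℝ *ᵥ v = l • v)
    (htri : ∀ i, v i = -1 ∨ v i = 0 ∨ v i = 1)
    (hnel : ∀ i j, G.Adj i j → v i ≠ v j) :
    ∃ (m : ℕ) (φ : G ≃g cycleGraph m),
      (l = 2 ∧ (∃ k, 1 ≤ k ∧ m = 4 * k) ∧
        ∀ i : Fin m, v (φ.symm i) =
          if (i : ℕ) % 4 = 0 then 1 else if (i : ℕ) % 4 = 2 then -1 else 0) ∨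
      (l = 3 ∧ (∃ k, 1 ≤ k ∧ m = 3 * k) ∧
        ∀ i : Fin m, v (φ.symm i) =
          if (i : ℕ) % 3 = 0 then 1 else if (i : ℕ) % 3 = 2 then -1 else 0) ∨
      (l = 4 ∧ (∃ k, 2 ≤ k ∧ m = 2 * k) ∧
        ∀ i : Fin m, v (φ.symm i) = if (i : ℕ) % 2 = 0 then 1 else -1) := by
  have htv : G.IsTrivalentEigenvector v l := ⟨heig, htri, hnel⟩
  have hn := hconn.three_le_card_of_card_edgeFinset_eq huni
  have : NeZero (Fintype.card V) := ⟨by omega⟩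
  have hdeg := htv.degree_eq_two hconn huni
  obtain ⟨ψ⟩ := hconn.nonempty_iso_cycleGraph_of_degree_eq_two hdeg
  obtain ⟨x, hx⟩ := htv.exists_eq_one hv fun x => by rw [hdeg x]; norm_num
  -- maximality of `v y` fixes the orientation of the cycle, which matters when `l = 3`
  obtain ⟨y, hxy, hmax⟩ := (G.neighborFinset x).exists_max_image v
    (card_pos.1 (by rw [card_neighborFinset_eq_degree, hdeg]; norm_num))
  rw [mem_neighborFinset] at hxy
  obtain ⟨σ, hσx, hσy⟩ := cycleGraph.exists_iso_eq_zero_eq_one (ψ.map_adj_iff.2 hxy)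
  let φ : G ≃g cycleGraph (Fintype.card V) := ψ.trans σ
  have hφx : φ.symm 0 = x := φ.symm_apply_eq.2 hσx.symm
  have hφy : φ.symm 1 = y := φ.symm_apply_eq.2 hσy.symm
  have hxz : G.Adj x (φ.symm (-1)) :=
    hφx ▸ φ.symm.map_adj_iff.2 (cycleGraph_adj_zero_neg_one (by omega))
  refine ⟨_, φ, cycleGraph.eigenvector_pattern hn (w := v ∘ φ.symm) ?_ ?_ ?_ ?_ ?_⟩
  · rw [φ.lapMatrix_mulVec_comp_symm, heig]
    rfl
  · simp [hφx, hx]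
  · simpa [hφy] using htv.eq_zero_or_eq_neg_one_of_adj hx hxy
  · exact htv.eq_zero_or_eq_neg_one_of_adj hx hxz
  · simpa [hφy] using hmax _ ((G.mem_neighborFinset _ _).2 hxz)
end

section
/- Let G be a connected graph that has a vertex of degree ≥ 3 and a vertex of degree 2 whose two neighbors both have degree 2, and suppose v is an eigenvector of L(G) with entries in {-1,0,1} and no edge joins equal-valued vertices. Then the eigenvalue λ satisfies 2 ≤ λ ≤ 4. -/
open SimpleGraph Matrix Finset

/-
At a vertex `j` with `v j = ±1`, the neighbors with nonzero value all carry `-v j`, so the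
eigenvalue equation at `j` reads `λ = deg j + d̄ j`, where `d̄ j ≤ deg j` counts the nonzero
neighbors; hence `deg j ≤ λ ≤ 2 deg j`. A degree-2 vertex `w` whose neighbors have degree 2
either has `v w ≠ 0` or, as links are never equal, all its neighbors are nonzero; either way
some nonzero vertex has degree 2, giving `2 ≤ λ ≤ 4`.
-/

lemma eq_neg_of_trivalent_of_ne_s13 {a b : ℝ} (ha : a = -1 ∨ a = 0 ∨ a = 1)
    (hb : b = -1 ∨ b = 0 ∨ b = 1) (ha0 : a ≠ 0) (hb0 : b ≠ 0) (hab : a ≠ b) : b = -a := by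
  rcases ha with rfl | rfl | rfl <;> rcases hb with rfl | rfl | rfl <;> norm_num at *

section TrivalentEigenvector

variable {V : Type*} [Fintype V] {G : SimpleGraph V} [DecidableRel G.Adj] {v : V → ℝ}

lemma sum_neighborFinset_eq_neg_card_mul (htri : ∀ i, v i = -1 ∨ v i = 0 ∨ v i = 1)
    (hnel : ∀ i j, G.Adj i j → v i ≠ v j) {j : V} (hj : v j ≠ 0) :
    ∑ u ∈ G.neighborFinset j, v u = -(#{u ∈ G.neighborFinset j | v u ≠ 0} : ℝ) * v j := by
  rw [← Finset.sum_filter_ne_zero, Finset.sum_congr rfl (g := fun _ ↦ -v j), sum_const,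
    nsmul_eq_mul]
  · ring
  intro u hu
  rw [mem_filter, mem_neighborFinset] at hu
  exact eq_neg_of_trivalent_of_ne_s13 (htri j) (htri u) hj hu.2 (hnel j u hu.1)

variable [DecidableEq V] {l : ℝ}

lemma eigenvalue_eq_degree_add_card_nonzero_neighbors (heig : G.lapMatrix ℝ *ᵥ v = l • v)
    (htri : ∀ i, v i = -1 ∨ v i = 0 ∨ v i = 1) (hnel : ∀ i j, G.Adj i j → v i ≠ v j)
    {j : V} (hj : v j ≠ 0) :
    l = G.degree j + #{u ∈ G.neighborFinset j | v u ≠ 0} := by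
  have heigj := congrFun heig j
  rw [Pi.smul_apply, smul_eq_mul, lapMatrix_mulVec_apply,
    sum_neighborFinset_eq_neg_card_mul htri hnel hj] at heigj
  exact mul_right_cancel₀ hj (by linarith)

lemma degree_le_eigenvalue_le_two_mul_degree (heig : G.lapMatrix ℝ *ᵥ v = l • v)
    (htri : ∀ i, v i = -1 ∨ v i = 0 ∨ v i = 1) (hnel : ∀ i j, G.Adj i j → v i ≠ v j)
    {j : V} (hj : v j ≠ 0) :
    (G.degree j : ℝ) ≤ l ∧ l ≤ 2 * G.degree j := by
  have hcard : #{u ∈ G.neighborFinset j | v u ≠ 0} ≤ G.degree j :=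
    (card_filter_le _ _).trans_eq (G.card_neighborFinset_eq_degree j)
  rw [eigenvalue_eq_degree_add_card_nonzero_neighbors heig htri hnel hj]
  constructor
  · exact le_add_of_nonneg_right (Nat.cast_nonneg _)
  · have : (#{u ∈ G.neighborFinset j | v u ≠ 0} : ℝ) ≤ G.degree j := by exact_mod_cast hcard
    linarith

end TrivalentEigenvector

theorem trivalent_eigenvalue_between_two_and_four_general {V : Type*} [Fintype V] [DecidableEq V]
    (G : SimpleGraph V) [DecidableRel G.Adj]
    (hdeg2 : ∃ w, G.degree w = 2 ∧ ∀ x ∈ G.neighborFinset w, G.degree x = 2)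
    (v : V → ℝ) (l : ℝ)
    (heig : G.lapMatrix ℝ *ᵥ v = l • v)
    (htri : ∀ i, v i = -1 ∨ v i = 0 ∨ v i = 1)
    (hnel : ∀ i j, G.Adj i j → v i ≠ v j) :
    2 ≤ l ∧ l ≤ 4 := by
  obtain ⟨w, hw2, hwn⟩ := hdeg2
  obtain ⟨j, hj, hj2⟩ : ∃ j, v j ≠ 0 ∧ G.degree j = 2 := by
    by_cases hw : v w = 0
    · obtain ⟨x, hx⟩ : (G.neighborFinset w).Nonempty := by
        rw [← card_pos, card_neighborFinset_eq_degree, hw2]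
        norm_num
      have hxw : v x ≠ v w := (hnel w x (G.mem_neighborFinset w x |>.mp hx)).symm
      exact ⟨x, hw ▸ hxw, hwn x hx⟩
    · exact ⟨w, hw, hw2⟩
  have hbounds := degree_le_eigenvalue_le_two_mul_degree heig htri hnel hj
  norm_num [hj2] at hbounds
  exact hbounds

/-- If a connected graph has a vertex of degree `≥ 3` and a degree-2 vertex both of whose
neighbors have degree `2`, then any trivalent Laplacian eigenvector without equal links has
eigenvalue `λ` with `2 ≤ λ ≤ 4`. -/
theorem trivalent_eigenvalue_between_two_and_four {V : Type*} [Fintype V] [DecidableEq V]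
    (G : SimpleGraph V) [DecidableRel G.Adj] (hconn : G.Connected)
    (hdeg3 : ∃ u, 3 ≤ G.degree u)
    (hdeg2 : ∃ w, G.degree w = 2 ∧ ∀ x ∈ G.neighborFinset w, G.degree x = 2)
    (v : V → ℝ) (hv : v ≠ 0) (l : ℝ)
    (heig : G.lapMatrix ℝ *ᵥ v = l • v)
    (htri : ∀ i, v i = -1 ∨ v i = 0 ∨ v i = 1)
    (hnel : ∀ i j, G.Adj i j → v i ≠ v j) :
    2 ≤ l ∧ l ≤ 4 :=
  trivalent_eigenvalue_between_two_and_four_general G hdeg2 v l heig htri hnel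
end

section
/- A connected cactus graph with at least two cycles and minimum degree at least 3 does not exist; equivalently, every finite connected cactus graph with more than one cycle has a vertex of degree at most 2. Consequently, a cactus graph with more than one cycle and no edge joining equal-valued vertices cannot admit a Laplacian eigenvector with all entries in {-1,1}. -/
open SimpleGraph Matrix

/-- A cactus graph: a connected graph in which any two cycles share at most one vertex. -/
def IsCactus {V : Type*} [DecidableEq V] (G : SimpleGraph V) : Prop :=
  G.Connected ∧
    ∀ (a b : V) (c₁ : G.Walk a a) (c₂ : G.Walk b b), c₁.IsCycle → c₂.IsCycle →
      c₁.edges.toFinset ≠ c₂.edges.toFinset →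
      (c₁.support.toFinset ∩ c₂.support.toFinset).card ≤ 1

/-! A finite graph of minimum degree at least 3 is not a cactus: if `p` is a longest path
starting at `a`, every neighbour of `a` lies on `p`, so besides the second vertex `s` of `p` the
vertex `a` has two more neighbours `y, z` on `p`, and the chords `ay`, `az` close two distinct
cycles that both pass through `a` and `s`.

A `{-1, 1}`-valued Laplacian eigenvector without equal links changes sign along every edge, so
the eigenvalue equation at `i` reads `2 deg i = λ` and the graph is regular. Being regular with a
vertex of degree at most 2, it has at most `|V|` edges, too few for more than one cycle. -/

namespace SimpleGraph

variable {V : Type*} {G : SimpleGraph V}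

lemma exists_isPath_forall_adj_mem_support [Nonempty V] [Finite G.edgeSet] :
    ∃ (u v : V) (p : G.Walk u v), p.IsPath ∧ ∀ w, G.Adj u w → w ∈ p.support := by
  obtain ⟨u, v, p, hp, hmax⟩ := Walk.exists_isPath_forall_isPath_length_le_length G
  refine ⟨u, v, p, hp, fun w huw => by_contra fun hw => ?_⟩
  have := hmax _ _ _ (hp.cons hw (h := huw.symm))
  simp at this

namespace Walk

variable [DecidableEq V] {u v w : V}

def chordCycle (p : G.Walk u v) (hw : w ∈ p.support) (huw : G.Adj u w) : G.Walk u u :=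
  cons huw (p.takeUntil w hw).reverse

variable {p : G.Walk u v}

lemma IsPath.eq_snd_of_mem_edges_takeUntil (hp : p.IsPath) (hw : w ∈ p.support) {x : V}
    (hx : s(u, x) ∈ (p.takeUntil w hw).edges) : x = p.snd := by
  obtain rfl | hwu := eq_or_ne w u
  · simp at hx
  · rw [(hp.takeUntil hw).eq_snd_of_mem_edges hx, snd_takeUntil hwu]

lemma IsPath.isCycle_chordCycle (hp : p.IsPath) (hw : w ∈ p.support) (huw : G.Adj u w)
    (hws : w ≠ p.snd) : (p.chordCycle hw huw).IsCycle := by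
  rw [chordCycle, cons_isCycle_iff, edges_reverse, List.mem_reverse]
  exact ⟨(hp.takeUntil hw).reverse, fun h => hws (hp.eq_snd_of_mem_edges_takeUntil hw h)⟩

lemma IsPath.eq_or_eq_snd_of_mem_edges_chordCycle (hp : p.IsPath) (hw : w ∈ p.support)
    (huw : G.Adj u w) {x : V} (hx : s(u, x) ∈ (p.chordCycle hw huw).edges) :
    x = w ∨ x = p.snd := by
  rw [chordCycle, edges_cons, List.mem_cons, edges_reverse, List.mem_reverse] at hx
  refine hx.imp (fun h => ?_) (hp.eq_snd_of_mem_edges_takeUntil hw)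
  rcases Sym2.eq_iff.mp h with ⟨-, rfl⟩ | ⟨rfl, -⟩
  · rfl
  · exact absurd rfl huw.ne

lemma snd_mem_support_chordCycle (hw : w ∈ p.support) (huw : G.Adj u w) :
    p.snd ∈ (p.chordCycle hw huw).support := by
  rw [chordCycle, support_cons, support_reverse, ← snd_takeUntil huw.ne' p hw]
  exact List.mem_cons_of_mem _ (List.mem_reverse.mpr (getVert_mem_support _ _))

lemma adj_snd_of_adj_of_mem_support (hw : w ∈ p.support) (huw : G.Adj u w) : G.Adj u p.snd := by
  rw [← snd_takeUntil huw.ne' p hw]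
  exact adj_snd (not_nil_of_ne huw.ne)

end Walk

lemma exists_adj_ne_ne_of_three_le_degree [DecidableEq V] {u : V} [Fintype (G.neighborSet u)]
    (hu : 3 ≤ G.degree u) (s : V) :
    ∃ y z, G.Adj u y ∧ G.Adj u z ∧ y ≠ s ∧ z ≠ s ∧ y ≠ z := by
  have : 1 < ((G.neighborFinset u).erase s).card := by
    have := Finset.pred_card_le_card_erase (s := G.neighborFinset u) (a := s)
    rw [card_neighborFinset_eq_degree] at this
    omega
  obtain ⟨y, hy, z, hz, hyz⟩ := Finset.one_lt_card.mp this
  simp only [Finset.mem_erase, mem_neighborFinset] at hy hz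
  exact ⟨y, z, hy.2, hz.2, hy.1, hz.1, hyz⟩

lemma exists_isCycle_two_le_card_inter_support [Fintype V] [DecidableEq V] [DecidableRel G.Adj]
    [Nonempty V] (h : ∀ x, 3 ≤ G.degree x) :
    ∃ (a : V) (c₁ c₂ : G.Walk a a), c₁.IsCycle ∧ c₂.IsCycle ∧
      c₁.edges.toFinset ≠ c₂.edges.toFinset ∧
      2 ≤ (c₁.support.toFinset ∩ c₂.support.toFinset).card := by
  obtain ⟨a, b, p, hp, hsupp⟩ := exists_isPath_forall_adj_mem_support (G := G)
  obtain ⟨y, z, hay, haz, hys, hzs, hyz⟩ := exists_adj_ne_ne_of_three_le_degree (h a) p.snd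
  have hy := hsupp y hay
  have hz := hsupp z haz
  refine ⟨a, p.chordCycle hy hay, p.chordCycle hz haz, hp.isCycle_chordCycle hy hay hys,
    hp.isCycle_chordCycle hz haz hzs, fun heq => ?_, ?_⟩
  · have hay_mem : s(a, y) ∈ (p.chordCycle hz haz).edges := by
      rw [← List.mem_toFinset, ← heq, List.mem_toFinset, Walk.chordCycle, Walk.edges_cons]
      exact List.mem_cons_self
    rcases hp.eq_or_eq_snd_of_mem_edges_chordCycle hz haz hay_mem with h | h
    exacts [hyz h, hys h]
  · have hsub : {a, p.snd} ⊆ (p.chordCycle hy hay).support.toFinset ∩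
        (p.chordCycle hz haz).support.toFinset := by
      simp only [Finset.insert_subset_iff, Finset.singleton_subset_iff, Finset.mem_inter,
        List.mem_toFinset, Walk.start_mem_support, Walk.snd_mem_support_chordCycle, and_self]
    refine le_of_eq_of_le ?_ (Finset.card_le_card hsub)
    exact (Finset.card_pair (Walk.adj_snd_of_adj_of_mem_support hy hay).ne).symm

lemma two_mul_card_edgeFinset_le [Fintype V] [DecidableRel G.Adj] {d : ℕ}
    (h : ∀ v, G.degree v ≤ d) : 2 * G.edgeFinset.card ≤ Fintype.card V * d := by
  rw [← sum_degrees_eq_twice_card_edges]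
  simpa using Finset.sum_le_sum fun v (_ : v ∈ Finset.univ) => h v

section Laplacian

variable [Fintype V] [DecidableEq V] [DecidableRel G.Adj]

lemma lapMatrix_mulVec_apply_of_forall_adj_eq_neg {R : Type*} [CommRing R] {v : V → R} {i : V}
    (h : ∀ j, G.Adj i j → v j = -v i) : (G.lapMatrix R *ᵥ v) i = 2 * G.degree i * v i := by
  rw [lapMatrix_mulVec_apply,
    Finset.sum_congr rfl fun j hj => h j ((mem_neighborFinset _ _ _).mp hj), Finset.sum_const,
    card_neighborFinset_eq_degree, nsmul_eq_mul]
  ring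

lemma degree_eq_of_lapMatrix_mulVec_eq_smul {R : Type*} [Field R] [CharZero R] {v : V → R}
    {l : R} (hv : G.lapMatrix R *ᵥ v = l • v) (hv0 : ∀ i, v i ≠ 0)
    (hneg : ∀ i j, G.Adj i j → v j = -v i) (i j : V) : G.degree i = G.degree j := by
  have hdeg (k : V) : 2 * (G.degree k : R) = l := by
    have := congrFun hv k
    rw [lapMatrix_mulVec_apply_of_forall_adj_eq_neg (hneg k), Pi.smul_apply, smul_eq_mul] at this
    exact mul_right_cancel₀ (hv0 k) this
  exact_mod_cast mul_left_cancel₀ two_ne_zero ((hdeg i).trans (hdeg j).symm)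

end Laplacian

end SimpleGraph

lemma IsCactus.exists_degree_le_two {V : Type*} [Fintype V] [DecidableEq V]
    {G : SimpleGraph V} [DecidableRel G.Adj] (hG : IsCactus G) : ∃ x, G.degree x ≤ 2 := by
  have := hG.1.nonempty
  by_contra! h
  obtain ⟨a, c₁, c₂, hc₁, hc₂, hne, hcard⟩ := exists_isCycle_two_le_card_inter_support h
  have := hG.2 a a c₁ c₂ hc₁ hc₂ hne
  omega

/-- Every connected cactus graph with more than one cycle (cyclomatic number `≥ 2`) has a
vertex of degree at most `2`; consequently, no cactus graph with more than one cycle and no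
equal links admits a bivalent (`{-1,1}`-valued) Laplacian eigenvector. -/
theorem cactus_not_bivalent {V : Type*} [Fintype V] [DecidableEq V]
    (G : SimpleGraph V) [DecidableRel G.Adj] (hcactus : IsCactus G)
    (hcyc : Fintype.card V + 1 ≤ G.edgeFinset.card) :
    (∃ x, G.degree x ≤ 2) ∧
    (∀ (v : V → ℝ) (l : ℝ), G.lapMatrix ℝ *ᵥ v = l • v →
      (∀ i, v i = 1 ∨ v i = -1) → (∀ i j, G.Adj i j → v i ≠ v j) → False) := by
  refine ⟨hcactus.exists_degree_le_two, fun v l hv hval hlink => ?_⟩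
  obtain ⟨x, hx⟩ := hcactus.exists_degree_le_two
  have hv0 (i : V) : v i ≠ 0 := by rcases hval i with h | h <;> norm_num [h]
  have hneg (i j : V) (hij : G.Adj i j) : v j = -v i := by
    have := hlink i j hij
    rcases hval i with hi | hi <;> rcases hval j with hj | hj <;> simp_all
  have hle (i : V) : G.degree i ≤ 2 :=
    (G.degree_eq_of_lapMatrix_mulVec_eq_smul hv hv0 hneg i x).trans_le hx
  have := G.two_mul_card_edgeFinset_le hle
  omega
end
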